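/- arXiv:1007.2226 — 5 statements merged into one kernel-verified Lean document; each statement's English description precedes it below -/
import Mathlib

section
/- Let θ, ζ, μ : [0,∞) → [0,∞) be functions such that: (i) either θ is identically 0, or θ(t) > 0 for all t > 0; (ii) θ is monotone increasing and ∫_{0+}^1 1/θ(t) dt = ∞ (i.e., for every a > 0, ∫_a^1 1/θ(t) dt diverges as a → 0+); (iii) ζ is integrable on [0,∞) and μ is bounded. If μ(t) ≤ ∫_t^∞ θ(μ(s)) ζ(s) ds for all t ≥ 0, then μ is identically 0. -/
/-!
Let `v t = ∫_t^∞ θ (μ s) ζ s ds`, so that `μ ≤ v` and `v` is continuous, nonincreasing and tends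
to `0`. If `μ t₀ > 0`, then `c = v t₀ > 0` and `v` passes through every level `c / 2 ^ k` at times
`T₀ ≤ T₁ ≤ ⋯`. On `[T_k, T_{k+1}]` we have `μ ≤ v ≤ c / 2 ^ k`, so the drop `c / 2 ^ (k + 1)` of `v`
is at most `θ (c / 2 ^ k) ∫_{T_k}^{T_{k+1}} ζ`. Hence `∑ₖ (c / 2 ^ (k + 1)) / θ (c / 2 ^ k)` is
bounded by `∫ ζ`, whereas by monotonicity of `θ` this sum dominates `½ ∫_0^c dt / θ t = ∞`.
-/

open MeasureTheory Filter Set Topology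

section Tail

variable {f : ℝ → ℝ} {a : ℝ}

theorem continuousOn_integral_Ioi (hf : IntegrableOn f (Ioi a)) (b : ℝ) :
    ContinuousOn (fun T => ∫ x in Ioi T, f x) (Icc a b) := by
  rcases le_total a b with hab | hba
  · have hint : IntervalIntegrable f volume a b :=
      (intervalIntegrable_iff_integrableOn_Ioc_of_le hab).2 (hf.mono_set Ioc_subset_Ioi_self)
    have hprim := intervalIntegral.continuousOn_primitive_interval' hint left_mem_uIcc
    rw [uIcc_of_le hab] at hprim
    refine (continuousOn_const (c := ∫ x in Ioi a, f x)).sub hprim |>.congr fun T hT => ?_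
    exact eq_sub_of_add_eq' (intervalIntegral.integral_interval_add_Ioi hf
      (hf.mono_set (Ioi_subset_Ioi hT.1)))
  · exact (subsingleton_Icc_of_ge hba).continuousOn _

theorem exists_integral_Ioi_eq (hf : IntegrableOn f (Ioi a)) {y : ℝ} (hy : 0 < y)
    (hya : y ≤ ∫ x in Ioi a, f x) : ∃ T, a ≤ T ∧ ∫ x in Ioi T, f x = y := by
  obtain ⟨b, hb, hab⟩ := ((tendsto_integral_Ioi_zero (f := f) tendsto_id).eventually
    (eventually_lt_nhds hy) |>.and (eventually_ge_atTop a)).exists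
  obtain ⟨T, hT, hTy⟩ := intermediate_value_Icc' hab (continuousOn_integral_Ioi hf b) ⟨hb.le, hya⟩
  exact ⟨T, hT.1, hTy⟩

theorem antitoneOn_integral_Ioi (hf : IntegrableOn f (Ioi a)) (hf0 : ∀ x, a < x → 0 ≤ f x) :
    AntitoneOn (fun T => ∫ x in Ioi T, f x) (Ici a) := fun _ hT _ _ hTU =>
  setIntegral_mono_set (hf.mono_set (Ioi_subset_Ioi hT))
    ((ae_restrict_iff' measurableSet_Ioi).2 (.of_forall fun x hx => hf0 x (hT.trans_lt hx)))
    (Ioi_subset_Ioi hTU).eventuallyLE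

theorem exists_monotone_integral_Ioi_eq (hf : IntegrableOn f (Ioi a))
    (hf0 : ∀ x, a < x → 0 ≤ f x) {y : ℕ → ℝ} (hy : StrictAnti y) (hy0 : ∀ k, 0 < y k)
    (hya : y 0 ≤ ∫ x in Ioi a, f x) :
    ∃ T : ℕ → ℝ, Monotone T ∧ (∀ k, a ≤ T k) ∧ ∀ k, ∫ x in Ioi (T k), f x = y k := by
  have hyk : ∀ k, y k ≤ ∫ x in Ioi a, f x := fun k => (hy.antitone k.zero_le).trans hya
  choose T hTa hTy using fun k => exists_integral_Ioi_eq hf (hy0 k) (hyk k)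
  refine ⟨T, monotone_nat_of_le_succ fun k => ?_, hTa, hTy⟩
  by_contra! hlt
  have := antitoneOn_integral_Ioi hf hf0 (hTa (k + 1)) (hTa k) hlt.le
  simp only [hTy] at this
  exact (hy k.lt_succ_self).not_ge this

end Tail

theorem sum_integral_adjacent_intervals_symm {f : ℝ → ℝ} {a : ℕ → ℝ} {N : ℕ}
    (hint : ∀ k < N, IntervalIntegrable f volume (a k) (a (k + 1))) :
    ∑ k ∈ Finset.range N, ∫ t in a (k + 1)..a k, f t = ∫ t in a N..a 0, f t := by
  rw [intervalIntegral.integral_symm, ← intervalIntegral.sum_integral_adjacent_intervals hint,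
    ← Finset.sum_neg_distrib]
  exact Finset.sum_congr rfl fun k _ => intervalIntegral.integral_symm _ _

section Osgood

variable {θ : ℝ → ℝ}

theorem pos_of_tendsto_nhdsGT_zero (hθ : MonotoneOn θ (Ici 0)) {y : ℕ → ℝ}
    (hy : Tendsto y atTop (𝓝[>] 0)) (hθy : ∀ k, 0 < θ (y k)) {t : ℝ} (ht : 0 < t) : 0 < θ t := by
  obtain ⟨k, hk0, hkt⟩ := ((hy.eventually self_mem_nhdsWithin).and
    ((tendsto_nhdsWithin_iff.1 hy).1.eventually (eventually_lt_nhds ht))).exists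
  exact (hθy k).trans_le (hθ (le_of_lt hk0) ht.le hkt.le)

theorem intervalIntegrable_one_div_of_monotoneOn (hθ : MonotoneOn θ (Ici 0))
    (hpos : ∀ t, 0 < t → 0 < θ t) {p q : ℝ} (hp : 0 < p) (hq : 0 < q) :
    IntervalIntegrable (fun t => 1 / θ t) volume p q := by
  refine AntitoneOn.intervalIntegrable fun s hs t _ hst => ?_
  have hs0 : 0 < s := (lt_min hp hq).trans_le hs.1
  exact one_div_le_one_div_of_le (hpos s hs0) (hθ hs0.le (hs0.trans_le hst).le hst)

theorem integral_one_div_le_of_monotoneOn (hθ : MonotoneOn θ (Ici 0))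
    (hpos : ∀ t, 0 < t → 0 < θ t) {a b : ℝ} (ha : 0 < a) (hab : a ≤ b) :
    ∫ t in a..b, 1 / θ t ≤ (b - a) / θ a := by
  calc ∫ t in a..b, 1 / θ t ≤ ∫ _ in a..b, 1 / θ a :=
        intervalIntegral.integral_mono_on hab
          (intervalIntegrable_one_div_of_monotoneOn hθ hpos ha (ha.trans_le hab))
          intervalIntegrable_const fun t ht =>
            one_div_le_one_div_of_le (hpos a ha) (hθ ha.le (ha.trans_le ht.1).le ht.1)
    _ = (b - a) / θ a := by rw [intervalIntegral.integral_const, smul_eq_mul, mul_one_div]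

theorem not_tendsto_integral_one_div_of_halving (hθ : MonotoneOn θ (Ici 0)) {c Z : ℝ}
    (hc : 0 < c) {w : ℕ → ℝ} (hw0 : ∀ k, 0 ≤ w k)
    (hw : ∀ k, c / 2 ^ (k + 1) ≤ θ (c / 2 ^ k) * w k)
    (hZ : ∀ N, ∑ k ∈ Finset.range N, w k ≤ Z) :
    ¬ Tendsto (fun a => ∫ t in a..1, 1 / θ t) (𝓝[>] 0) atTop := by
  set y : ℕ → ℝ := fun k => c / 2 ^ k
  have hy0 : ∀ k, 0 < y k := fun k => by positivity
  have hy : Tendsto y atTop (𝓝[>] 0) :=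
    tendsto_nhdsWithin_iff.2 ⟨tendsto_const_nhds.div_atTop
      (tendsto_pow_atTop_atTop_of_one_lt one_lt_two), .of_forall hy0⟩
  have hθy : ∀ k, 0 < θ (y k) := fun k =>
    pos_of_mul_pos_left ((hy0 (k + 1)).trans_le (hw k)) (hw0 k)
  have hpos : ∀ t, 0 < t → 0 < θ t := fun _ => pos_of_tendsto_nhdsGT_zero hθ hy hθy
  have hii : ∀ {p q : ℝ}, 0 < p → 0 < q → IntervalIntegrable (fun t => 1 / θ t) volume p q :=
    intervalIntegrable_one_div_of_monotoneOn hθ hpos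
  -- the halving `y k - y (k + 1) = 2 * (y (k + 1) - y (k + 2))` absorbs the drop of `θ` from
  -- `y k` to `y (k + 1)`
  have hstep : ∀ k, ∫ t in y (k + 1)..y k, 1 / θ t ≤ 2 * w (k + 1) := fun k => by
    calc ∫ t in y (k + 1)..y k, 1 / θ t ≤ (y k - y (k + 1)) / θ (y (k + 1)) :=
          integral_one_div_le_of_monotoneOn hθ hpos (hy0 _) (by simp only [y]; gcongr <;> simp)
      _ = 2 * (c / 2 ^ (k + 1 + 1)) / θ (y (k + 1)) := by simp only [y]; ring
      _ ≤ 2 * w (k + 1) := by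
          rw [div_le_iff₀ (hθy _), mul_assoc, mul_comm (w _)]
          gcongr
          exact hw (k + 1)
  have hbound : ∀ N, ∫ t in y N..c, 1 / θ t ≤ 2 * Z := fun N => by
    calc ∫ t in y N..c, 1 / θ t = ∑ k ∈ Finset.range N, ∫ t in y (k + 1)..y k, 1 / θ t := by
          rw [sum_integral_adjacent_intervals_symm fun k _ => hii (hy0 k) (hy0 (k + 1))]
          simp [y]
      _ ≤ ∑ k ∈ Finset.range N, 2 * w (k + 1) := Finset.sum_le_sum fun k _ => hstep k
      _ ≤ 2 * Z := by
          rw [← Finset.mul_sum]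
          have := hZ (N + 1)
          rw [Finset.sum_range_succ'] at this
          linarith [hw0 0]
  intro hosg
  obtain ⟨N, hN⟩ := ((hosg.comp hy).eventually
    (eventually_gt_atTop (2 * Z + ∫ t in c..1, 1 / θ t))).exists
  have hsplit := intervalIntegral.integral_add_adjacent_intervals (hii (hy0 N) hc) (hii hc one_pos)
  simp only [Function.comp] at hN
  linarith [hbound N]

end Osgood

theorem integral_mul_le_of_forall_le {θ ζ μ : ℝ → ℝ} (hθ : MonotoneOn θ (Ici 0))
    (hζ0 : ∀ s, 0 ≤ s → 0 ≤ ζ s) (hμ0 : ∀ s, 0 ≤ s → 0 ≤ μ s) {T U y : ℝ} (hT : 0 ≤ T)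
    (hTU : T ≤ U) (hg : IntegrableOn (fun s => θ (μ s) * ζ s) (Ioc T U))
    (hζ : IntegrableOn ζ (Ioc T U)) (hy : ∀ s ∈ Ioc T U, μ s ≤ y) :
    ∫ s in T..U, θ (μ s) * ζ s ≤ θ y * ∫ s in T..U, ζ s := by
  rw [intervalIntegral.integral_of_le hTU, intervalIntegral.integral_of_le hTU,
    ← integral_const_mul]
  refine setIntegral_mono_on hg (hζ.const_mul _) measurableSet_Ioc fun s hs => ?_
  have hs0 : 0 ≤ s := hT.trans hs.1.le
  exact mul_le_mul_of_nonneg_right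
    (hθ (hμ0 s hs0) ((hμ0 s hs0).trans (hy s hs)) (hy s hs)) (hζ0 s hs0)

theorem sum_integral_le_integral_Ici {ζ : ℝ → ℝ} {a : ℝ} (hζ : IntegrableOn ζ (Ici a))
    (hζ0 : ∀ s, a ≤ s → 0 ≤ ζ s) {T : ℕ → ℝ} (hT : Monotone T) (haT : a ≤ T 0) (N : ℕ) :
    ∑ k ∈ Finset.range N, ∫ s in T k..T (k + 1), ζ s ≤ ∫ s in Ici a, ζ s := by
  have hsub : ∀ {p q}, a ≤ p → Ioc p q ⊆ Ici a := fun hp s hs => hp.trans hs.1.le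
  rw [intervalIntegral.sum_integral_adjacent_intervals fun k _ =>
      (intervalIntegrable_iff_integrableOn_Ioc_of_le (hT k.le_succ)).2
        (hζ.mono_set (hsub (haT.trans (hT k.zero_le)))),
    intervalIntegral.integral_of_le (hT N.zero_le)]
  exact setIntegral_mono_set hζ ((ae_restrict_iff' measurableSet_Ici).2 (.of_forall hζ0))
    (hsub haT).eventuallyLE

theorem integral_Ioi_sub_integral_Ioi_le {θ ζ μ : ℝ → ℝ} (hθ : MonotoneOn θ (Ici 0))
    (hζ0 : ∀ s, 0 ≤ s → 0 ≤ ζ s) (hμ0 : ∀ s, 0 ≤ s → 0 ≤ μ s)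
    (hμ : ∀ s, 0 ≤ s → μ s ≤ ∫ x in Ioi s, θ (μ x) * ζ x) {T U : ℝ}
    (hg : IntegrableOn (fun s => θ (μ s) * ζ s) (Ioi T))
    (hg0 : ∀ s, T < s → 0 ≤ θ (μ s) * ζ s) (hζ : IntegrableOn ζ (Ioi T)) (hT : 0 ≤ T)
    (hTU : T ≤ U) :
    (∫ s in Ioi T, θ (μ s) * ζ s) - ∫ s in Ioi U, θ (μ s) * ζ s ≤
      θ (∫ s in Ioi T, θ (μ s) * ζ s) * ∫ s in T..U, ζ s := by
  rw [intervalIntegral.integral_Ioi_sub_Ioi hg hTU]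
  refine integral_mul_le_of_forall_le hθ hζ0 hμ0 hT hTU (hg.mono_set Ioc_subset_Ioi_self)
    (hζ.mono_set Ioc_subset_Ioi_self) fun s hs => ?_
  exact (hμ s (hT.trans hs.1.le)).trans
    (antitoneOn_integral_Ioi hg hg0 (le_refl T) hs.1.le hs.1.le)

theorem bihari_osgood_uniqueness_general
    (θ ζ μ : ℝ → ℝ)
    (hθ_nonneg : ∀ t, 0 ≤ t → 0 ≤ θ t)
    (hζ_nonneg : ∀ t, 0 ≤ t → 0 ≤ ζ t)
    (hμ_nonneg : ∀ t, 0 ≤ t → 0 ≤ μ t)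
    (hθ_mono : MonotoneOn θ (Set.Ici 0))
    (hθ_osgood : Tendsto (fun a => ∫ t in a..1, 1 / θ t) (nhdsWithin 0 (Set.Ioi 0)) atTop)
    (hζ_int : IntegrableOn ζ (Set.Ici 0))
    (h : ∀ t, 0 ≤ t → μ t ≤ ∫ s in Set.Ioi t, θ (μ s) * ζ s) :
    ∀ t, 0 ≤ t → μ t = 0 := by
  intro t₀ ht₀
  by_contra hne
  set g : ℝ → ℝ := fun s => θ (μ s) * ζ s
  -- a non-integrable `g` has integral `0`, which would force `μ t₀ = 0`
  have hg : IntegrableOn g (Ioi t₀) := by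
    by_contra hg
    exact hne (le_antisymm (integral_undef hg ▸ h t₀ ht₀) (hμ_nonneg t₀ ht₀))
  have hg0 : ∀ s, t₀ < s → 0 ≤ g s := fun s hs =>
    mul_nonneg (hθ_nonneg _ (hμ_nonneg s (ht₀.trans hs.le))) (hζ_nonneg s (ht₀.trans hs.le))
  set c := ∫ s in Ioi t₀, g s
  have hc : 0 < c := ((hμ_nonneg t₀ ht₀).lt_of_ne' hne).trans_le (h t₀ ht₀)
  obtain ⟨T, hT_mono, hT_ge, hT_eq⟩ := exists_monotone_integral_Ioi_eq hg hg0
    (y := fun k => c / 2 ^ k) (fun k l hkl => div_lt_div_of_pos_left hc (by positivity)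
      (pow_lt_pow_right₀ one_lt_two hkl)) (fun k => by positivity) (by simp [c])
  refine not_tendsto_integral_one_div_of_halving hθ_mono hc
    (w := fun k => ∫ s in T k..T (k + 1), ζ s) (fun k => ?_) (fun k => ?_)
    (sum_integral_le_integral_Ici hζ_int hζ_nonneg hT_mono (ht₀.trans (hT_ge 0))) hθ_osgood
  · exact intervalIntegral.integral_nonneg (hT_mono k.le_succ) fun s hs =>
      hζ_nonneg s (ht₀.trans ((hT_ge k).trans hs.1))
  · have hTk : t₀ ≤ T k := hT_ge k
    have hdrop := integral_Ioi_sub_integral_Ioi_le hθ_mono hζ_nonneg hμ_nonneg h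
      (hg.mono_set (Ioi_subset_Ioi hTk)) (fun s hs => hg0 s (hTk.trans_lt hs))
      (hζ_int.mono_set (Ioi_subset_Ici_iff.2 (ht₀.trans hTk))) (ht₀.trans hTk)
      (hT_mono (k.le_add_right 1))
    rw [hT_eq k, hT_eq (k + 1)] at hdrop
    exact (by ring : c / 2 ^ (k + 1) = c / 2 ^ k - c / 2 ^ (k + 1)).trans_le hdrop

theorem bihari_osgood_uniqueness
    (θ ζ μ : ℝ → ℝ)
    (hθ_nonneg : ∀ t, 0 ≤ t → 0 ≤ θ t)
    (hζ_nonneg : ∀ t, 0 ≤ t → 0 ≤ ζ t)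
    (hμ_nonneg : ∀ t, 0 ≤ t → 0 ≤ μ t)
    (hθ_dichotomy : (∀ t, 0 ≤ t → θ t = 0) ∨ (∀ t, 0 < t → 0 < θ t))
    (hθ_mono : MonotoneOn θ (Set.Ici 0))
    (hθ_osgood : Tendsto (fun a => ∫ t in a..1, 1 / θ t) (nhdsWithin 0 (Set.Ioi 0)) atTop)
    (hζ_int : IntegrableOn ζ (Set.Ici 0))
    (hμ_bdd : ∃ M, ∀ t, 0 ≤ t → μ t ≤ M)
    (h : ∀ t, 0 ≤ t → μ t ≤ ∫ s in Set.Ioi t, θ (μ s) * ζ s) :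
    ∀ t, 0 ≤ t → μ t = 0 :=
  bihari_osgood_uniqueness_general θ ζ μ hθ_nonneg hζ_nonneg hμ_nonneg hθ_mono hθ_osgood hζ_int h
end

section
/- Let p > 0 be a real number and B a real normed vector space. For any x, y ∈ B, one has ∫_0^1 (1 − α) ‖x + α y‖^p dα ≥ 3^{−(1+p)} ‖x‖^p. -/
/-!
Write `s = ‖x‖`, `t = ‖y‖`. Since `‖x + α • y‖ ≥ |s - α t|`, the norm stays above `s / 3`
except for `α` in the interval `(a, 2a)`, `a = 2s / (3t)`. Whatever `a` is, removing
`(a, 2a)` from `[0, 1]` leaves a set of `(1 - α) dα`-measure at least `1 / 3` (the worst case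
is `a = 1 / 3`), so the integral is at least `(s / 3) ^ p / 3 = 3 ^ (-(1 + p)) * s ^ p`.
-/

open MeasureTheory intervalIntegral Set

lemma one_third_le_integral_one_sub_add {a : ℝ} (ha : 0 ≤ a) :
    1 / 3 ≤ (∫ α in 0..min a 1, (1 - α)) + ∫ α in min (2 * a) 1..1, (1 - α) := by
  simp only [integral_sub intervalIntegrable_const intervalIntegrable_id,
    intervalIntegral.integral_const, integral_id, smul_eq_mul, mul_one]
  rcases le_total a (1 / 2) with h | h
  · rw [min_eq_left (by linarith), min_eq_left (by linarith)]
    nlinarith [sq_nonneg (a - 1 / 3)]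
  rcases le_total a 1 with h' | h'
  · rw [min_eq_left h', min_eq_right (by linarith)]
    nlinarith
  · rw [min_eq_right h', min_eq_right (by linarith)]
    norm_num

lemma integral_one_sub_mul_le_integral {g : ℝ → ℝ} {c d m : ℝ} (hcd : c ≤ d)
    (hg : IntervalIntegrable g volume c d)
    (hgm : ∀ α ∈ Ioo c d, (1 - α) * m ≤ g α) :
    (∫ α in c..d, (1 - α)) * m ≤ ∫ α in c..d, g α := by
  rw [← intervalIntegral.integral_mul_const]
  exact integral_mono_on_of_le_Ioo hcd (Continuous.intervalIntegrable (by fun_prop) _ _) hg hgm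

lemma div_three_le_integral_of_le_off_Ioo {g : ℝ → ℝ} {a m : ℝ} (ha : 0 ≤ a) (hm : 0 ≤ m)
    (hg : LocallyIntegrable g) (hg0 : ∀ α ∈ Ioo 0 1, 0 ≤ g α)
    (hgm : ∀ α ∈ Ioo 0 1, α ≤ a ∨ 2 * a ≤ α → (1 - α) * m ≤ g α) :
    m / 3 ≤ ∫ α in 0..1, g α := by
  have hgi : ∀ c d, IntervalIntegrable g volume c d := fun _ _ =>
    (hg.integrableOn_isCompact isCompact_uIcc).intervalIntegrable
  set a' := min a 1
  set b' := min (2 * a) 1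
  have ha' : 0 ≤ a' := le_min ha zero_le_one
  have hab' : a' ≤ b' := min_le_min_right 1 (by linarith)
  have hb' : b' ≤ 1 := min_le_right _ _
  have hleft : (∫ α in 0..a', (1 - α)) * m ≤ ∫ α in 0..a', g α :=
    integral_one_sub_mul_le_integral ha' (hgi _ _) fun α hα =>
      hgm α ⟨hα.1, hα.2.trans_le (min_le_right _ _)⟩ (Or.inl (hα.2.le.trans (min_le_left _ _)))
  have hmiddle : 0 ≤ ∫ α in a'..b', g α := by
    simpa using integral_mono_on_of_le_Ioo hab' intervalIntegrable_const (hgi _ _) fun α hα =>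
      hg0 α ⟨ha'.trans_lt hα.1, hα.2.trans_le hb'⟩
  have hright : (∫ α in b'..1, (1 - α)) * m ≤ ∫ α in b'..1, g α :=
    integral_one_sub_mul_le_integral hb' (hgi _ _) fun α hα =>
      hgm α ⟨(ha'.trans hab').trans_lt hα.1, hα.2⟩
        (Or.inr ((min_lt_iff.mp hα.1).resolve_right hα.2.not_gt).le)
  rw [← integral_add_adjacent_intervals (hgi 0 a') (hgi a' 1),
    ← integral_add_adjacent_intervals (hgi a' b') (hgi b' 1)]
  nlinarith [one_third_le_integral_one_sub_add ha]

lemma abs_norm_sub_mul_norm_le_norm_add_smul {B : Type*} [NormedAddCommGroup B]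
    [NormedSpace ℝ B] (x y : B) {α : ℝ} (hα : 0 ≤ α) : |‖x‖ - α * ‖y‖| ≤ ‖x + α • y‖ := by
  simpa [norm_smul, abs_of_nonneg hα] using abs_norm_sub_norm_le x (-(α • y))

/-- At `y = 0` the threshold `2 ‖x‖ / (3 ‖y‖)` is `0`, and every `α` qualifies. -/
lemma norm_div_three_le_norm_add_smul {B : Type*} [NormedAddCommGroup B] [NormedSpace ℝ B]
    (x y : B) {α : ℝ} (hα : 0 ≤ α)
    (h : α ≤ 2 * ‖x‖ / (3 * ‖y‖) ∨ 2 * (2 * ‖x‖ / (3 * ‖y‖)) ≤ α) :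
    ‖x‖ / 3 ≤ ‖x + α • y‖ := by
  rcases eq_or_ne y 0 with rfl | hy
  · simpa using div_le_self (norm_nonneg x) (by norm_num : (1 : ℝ) ≤ 3)
  have hy' : 0 < 3 * ‖y‖ := by positivity
  refine le_trans ?_ (abs_norm_sub_mul_norm_le_norm_add_smul x y hα)
  rcases h with h | h
  · rw [le_div_iff₀ hy'] at h
    exact le_trans (by linarith) (le_abs_self _)
  · rw [← mul_div_assoc, div_le_iff₀ hy'] at h
    exact le_trans (by linarith) (neg_le_abs _)

theorem integral_segment_rpow_lower_bound
    (p : ℝ) (hp : 0 < p)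
    {B : Type*} [NormedAddCommGroup B] [NormedSpace ℝ B]
    (x y : B) :
    (3 : ℝ) ^ (-(1 + p)) * ‖x‖ ^ p ≤ ∫ α in (0:ℝ)..1, (1 - α) * ‖x + α • y‖ ^ p := by
  have hK : (3 : ℝ) ^ (-(1 + p)) * ‖x‖ ^ p = (‖x‖ / 3) ^ p / 3 := by
    rw [Real.div_rpow (norm_nonneg x) (by norm_num), Real.rpow_neg (by norm_num),
      Real.rpow_add (by norm_num), Real.rpow_one]
    field_simp
  rw [hK]
  refine div_three_le_integral_of_le_off_Ioo (a := 2 * ‖x‖ / (3 * ‖y‖)) (by positivity)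
    (by positivity) ?_ (fun α hα => ?_) (fun α hα hgood => ?_)
  · exact Continuous.locallyIntegrable (by fun_prop (disch := simp [hp.le]))
  · exact mul_nonneg (by linarith [hα.2]) (by positivity)
  · gcongr
    · linarith [hα.2]
    · exact norm_div_three_le_norm_add_smul x y hα.1.le hgood
end

section
/- Let H be a real inner product space and define D(x) = x / ‖x‖ for x ≠ 0 and D(0) = 0. Then for any x, y ∈ H, one has ‖x − y‖ ≥ min(‖x‖, ‖y‖) · ‖D(x) − D(y)‖. -/
open Classical RealInnerProductSpace

/-
Assume ‖x‖ ≤ ‖y‖ and put t = ‖x‖ / ‖y‖ ≤ 1. Then ‖x‖ · (x/‖x‖ − y/‖y‖) = x − t y, where t y is the radial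
projection of y onto the sphere of radius ‖x‖. Expanding the squares and bounding ⟪x, y⟫ by Cauchy–Schwarz gives
‖x − y‖² − ‖x − t y‖² ≥ (1 − t)² ‖y‖² ≥ 0.
-/

section

variable {H : Type*} [NormedAddCommGroup H] [InnerProductSpace ℝ H]

theorem norm_sub_smul_le_norm_sub {x y : H} {t : ℝ} (ht₀ : 0 ≤ t) (ht₁ : t ≤ 1)
    (ht : t * ‖y‖ = ‖x‖) : ‖x - t • y‖ ≤ ‖x - y‖ := by
  have hxy : ⟪x, y⟫ ≤ t * ‖y‖ * ‖y‖ := ht ▸ real_inner_le_norm x y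
  have hsq : ‖x - t • y‖ ^ 2 ≤ ‖x - y‖ ^ 2 := by
    rw [norm_sub_sq_real, norm_sub_sq_real, real_inner_smul_right, norm_smul,
      Real.norm_of_nonneg ht₀, ← ht]
    nlinarith [mul_nonneg (sub_nonneg.mpr ht₁) (sub_nonneg.mpr hxy), sq_nonneg ((1 - t) * ‖y‖)]
  exact (pow_le_pow_iff_left₀ (norm_nonneg _) (norm_nonneg _) two_ne_zero).mp hsq

theorem norm_mul_norm_sub_inv_norm_smul_le {x y : H} (h : ‖x‖ ≤ ‖y‖) :
    ‖x‖ * ‖‖x‖⁻¹ • x - ‖y‖⁻¹ • y‖ ≤ ‖x - y‖ := by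
  rcases eq_or_ne y 0 with rfl | hy
  · simp [norm_le_zero_iff.mp (h.trans_eq norm_zero)]
  have hy' : ‖y‖ ≠ 0 := norm_ne_zero_iff.mpr hy
  have hx : ‖x‖ • ‖x‖⁻¹ • x = x := by
    rcases eq_or_ne x 0 with rfl | hx
    · simp
    · rw [smul_smul, mul_inv_cancel₀ (norm_ne_zero_iff.mpr hx), one_smul]
  calc ‖x‖ * ‖‖x‖⁻¹ • x - ‖y‖⁻¹ • y‖ = ‖‖x‖ • (‖x‖⁻¹ • x - ‖y‖⁻¹ • y)‖ := by
        rw [norm_smul, Real.norm_of_nonneg (norm_nonneg x)]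
    _ = ‖x - (‖x‖ / ‖y‖) • y‖ := by rw [smul_sub, hx, smul_smul, div_eq_mul_inv]
    _ ≤ ‖x - y‖ := norm_sub_smul_le_norm_sub (by positivity) (div_le_one_of_le₀ h (norm_nonneg y))
        (div_mul_cancel₀ _ hy')

end

theorem min_norm_mul_dist_normalized_le
    {H : Type*} [NormedAddCommGroup H] [InnerProductSpace ℝ H]
    (D : H → H) (hD : ∀ x, D x = if x = 0 then 0 else ‖x‖⁻¹ • x)
    (x y : H) :
    min ‖x‖ ‖y‖ * ‖D x - D y‖ ≤ ‖x - y‖ := by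
  have hD' : ∀ z, D z = ‖z‖⁻¹ • z := fun z ↦ by
    rw [hD]; split_ifs with hz <;> simp [hz]
  rw [hD', hD']
  rcases le_total ‖x‖ ‖y‖ with h | h
  · rw [min_eq_left h]
    exact norm_mul_norm_sub_inv_norm_smul_le h
  · rw [min_eq_right h, norm_sub_rev, norm_sub_rev x]
    exact norm_mul_norm_sub_inv_norm_smul_le h
end

section
/- Let H be a real inner product space, let D(x) = x/‖x‖ for x ≠ 0 and D(0) = 0, and let 0 < p ≤ 1. Then for any x, y ∈ H, one has ‖ ‖x‖^p · D(x) − ‖y‖^p · D(y) ‖ ≤ (1 + 2^p) · ‖x − y‖^p. -/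
open Classical
theorem rpow_radial_map_holder
    {H : Type*} [NormedAddCommGroup H] [InnerProductSpace ℝ H]
    (D : H → H) (hD : ∀ x, D x = if x = 0 then 0 else ‖x‖⁻¹ • x)
    (p : ℝ) (hp0 : 0 < p) (hp1 : p ≤ 1) (x y : H) :
    ‖(‖x‖ ^ p) • D x - (‖y‖ ^ p) • D y‖ ≤ (1 + 2 ^ p) * ‖x - y‖ ^ p := by
  have hf : ∀ z : H, (‖z‖ ^ p) • D z = (‖z‖ ^ (p - 1)) • z := by
    intro z
    rw [hD]
    by_cases hz : z = 0
    · simp [hz]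
    · have hz' : (0:ℝ) < ‖z‖ := norm_pos_iff.mpr hz
      simp only [hz, if_neg, if_false]
      rw [smul_smul]
      congr 1
      rw [← Real.rpow_neg_one ‖z‖, ← Real.rpow_add hz']
      ring_nf
  rw [hf x, hf y]
  have hnorm : ∀ z : H, ‖(‖z‖ ^ (p - 1)) • z‖ = ‖z‖ ^ p := by
    intro z
    rw [norm_smul, Real.norm_eq_abs,
      abs_of_nonneg (Real.rpow_nonneg (norm_nonneg z) _)]
    by_cases hz : z = 0
    · simp [hz, Real.zero_rpow (ne_of_gt hp0)]
    · have hz' : (0:ℝ) < ‖z‖ := norm_pos_iff.mpr hz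
      nth_rewrite 2 [← Real.rpow_one ‖z‖]
      rw [← Real.rpow_add hz']
      norm_num
  have h2p : (2:ℝ) ≤ 1 + 2 ^ p := by
    have : (1:ℝ) = 2 ^ (0:ℝ) := by norm_num
    nlinarith [Real.rpow_le_rpow_of_exponent_le (by norm_num : (1:ℝ) ≤ 2) hp0.le,
      Real.rpow_zero (2:ℝ)]
  wlog hab : ‖y‖ ≤ ‖x‖ generalizing x y
  · have := this y x (le_of_not_ge hab)
    rwa [norm_sub_rev, norm_sub_rev y x] at this
  by_cases hxy : x = y
  · subst hxy
    simp only [sub_self, norm_zero]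
    positivity
  have hd : (0:ℝ) < ‖x - y‖ := by
    rw [norm_pos_iff]; exact sub_ne_zero.mpr hxy
  set a := ‖x‖ with ha
  set b := ‖y‖ with hb
  set d := ‖x - y‖ with hdd
  have hb0 : 0 ≤ b := norm_nonneg _
  have ha0 : 0 ≤ a := norm_nonneg _
  have habd : a - b ≤ d := by
    have := abs_norm_sub_norm_le x y
    rw [abs_le] at this; linarith [this.2]
  have hdp : (0:ℝ) < d ^ p := Real.rpow_pos_of_pos hd p
  by_cases hda : d ≤ a
  · -- case d ≤ a, so a > 0
    have ha' : (0:ℝ) < a := lt_of_lt_of_le hd hda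
    have key : (a ^ (p-1)) • x - (b ^ (p-1)) • y
        = (a ^ (p-1)) • (x - y) + (a ^ (p-1) - b ^ (p-1)) • y := by
      rw [smul_sub, sub_smul]; abel
    rw [key]
    have hap : a ^ (p - 1) ≤ d ^ (p - 1) :=
      Real.rpow_le_rpow_of_nonpos hd hda (by linarith)
    have hdpd : d ^ (p - 1) * d = d ^ p := by
      nth_rewrite 2 [← Real.rpow_one d]
      rw [← Real.rpow_add hd]; norm_num
    have h1 : ‖(a ^ (p-1)) • (x - y)‖ ≤ d ^ p := by
      rw [norm_smul, Real.norm_eq_abs,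
        abs_of_nonneg (Real.rpow_nonneg ha0 _)]
      calc a ^ (p-1) * d ≤ d ^ (p-1) * d := by
            apply mul_le_mul_of_nonneg_right hap hd.le
        _ = d ^ p := hdpd
    have h2 : ‖(a ^ (p-1) - b ^ (p-1)) • y‖ ≤ d ^ p := by
      rw [norm_smul, Real.norm_eq_abs]
      by_cases hby : b = 0
      · rw [show ‖y‖ = (0:ℝ) from hby, mul_zero]; exact hdp.le
      have hb' : (0:ℝ) < b := lt_of_le_of_ne hb0 (Ne.symm hby)
      have hba : b ^ (p-1) * b ≤ a ^ (p-1) * a := by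
        have h1 : b ^ (p-1) * b = b ^ p := by
          nth_rewrite 2 [← Real.rpow_one b]
          rw [← Real.rpow_add hb']; norm_num
        have h2 : a ^ (p-1) * a = a ^ p := by
          nth_rewrite 2 [← Real.rpow_one a]
          rw [← Real.rpow_add ha']; norm_num
        rw [h1, h2]
        exact Real.rpow_le_rpow hb0 hab hp0.le
      have hmono : a ^ (p-1) ≤ b ^ (p-1) :=
        Real.rpow_le_rpow_of_nonpos hb' hab (by linarith)
      rw [abs_of_nonpos (by linarith)]
      calc -(a ^ (p-1) - b ^ (p-1)) * b = b ^ (p-1) * b - a ^ (p-1) * b := by ring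
        _ ≤ a ^ (p-1) * a - a ^ (p-1) * b := by linarith
        _ = a ^ (p-1) * (a - b) := by ring
        _ ≤ d ^ (p-1) * d := by
            apply mul_le_mul hap habd (by linarith)
              (Real.rpow_nonneg hd.le _)
        _ = d ^ p := hdpd
    calc ‖(a ^ (p-1)) • (x - y) + (a ^ (p-1) - b ^ (p-1)) • y‖
        ≤ ‖(a ^ (p-1)) • (x - y)‖ + ‖(a ^ (p-1) - b ^ (p-1)) • y‖ := norm_add_le _ _
      _ ≤ d ^ p + d ^ p := add_le_add h1 h2
      _ ≤ (1 + 2 ^ p) * d ^ p := by nlinarith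
  · -- case a < d
    push_neg at hda
    have hadp : a ^ p ≤ d ^ p := Real.rpow_le_rpow ha0 hda.le hp0.le
    have hbdp : b ^ p ≤ d ^ p :=
      Real.rpow_le_rpow hb0 (le_trans hab hda.le) hp0.le
    calc ‖(a ^ (p-1)) • x - (b ^ (p-1)) • y‖
        ≤ ‖(a ^ (p-1)) • x‖ + ‖(b ^ (p-1)) • y‖ := norm_sub_le _ _
      _ = a ^ p + b ^ p := by rw [hnorm x, hnorm y]
      _ ≤ d ^ p + d ^ p := add_le_add hadp hbdp
      _ ≤ (1 + 2 ^ p) * d ^ p := by nlinarith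
end

section
/- Let p ≥ 2 be a real number and x, y ∈ ℝ^l. Then the sum over s of second-order Taylor remainders satisfies: p · ∫_0^1 (1−α) [ ‖x + α y‖^{p−2} ‖y‖^2 + (p−2) · 1_{x+αy ≠ 0} · ‖x + α y‖^{p−4} · ⟨y, x + α y⟩^2 ] dα ≥ p · 3^{1−p} · ‖y‖^2 · ‖x‖^{p−2}. -/
/-!
For `p ≥ 2` the jump term is nonnegative, so it suffices to bound
`∫₀¹ (1 - α) ‖x + α y‖ ^ (p - 2)` from below. By the reverse triangle inequality
`‖x + α y‖ ≥ ‖x‖ / 3` unless `α ‖y‖ ∈ (2‖x‖/3, 4‖x‖/3)`, an interval of the form `(u, 2u)`, and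
removing such an interval from `[0, 1]` costs at most `1/6` of the total weight
`∫₀¹ (1 - α) = 1/2` (the worst case is `u = 1/3`). Hence the integral is at least
`(‖x‖ / 3) ^ (p - 2) / 3 = 3 ^ (1 - p) ‖x‖ ^ (p - 2)`.
-/

open scoped RealInnerProductSpace
open MeasureTheory Set

lemma mul_integral_one_sub_le_integral {f : ℝ → ℝ} {a b c : ℝ} (hab : a ≤ b) (hb : b ≤ 1)
    (hf : IntervalIntegrable f volume a b) (hc : ∀ α ∈ Ioo a b, c ≤ f α) :
    c * ((b - a) - (b ^ 2 - a ^ 2) / 2) ≤ ∫ α in a..b, (1 - α) * f α := by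
  have hweight : ∫ α in a..b, (1 - α) * c = c * ((b - a) - (b ^ 2 - a ^ 2) / 2) := by
    simp only [intervalIntegral.integral_mul_const, intervalIntegral.integral_sub
      intervalIntegrable_const intervalIntegral.intervalIntegrable_id, integral_one, integral_id]
    ring
  rw [← hweight]
  refine intervalIntegral.integral_mono_on_of_le_Ioo hab
    (Continuous.intervalIntegrable (by fun_prop) _ _) (hf.continuousOn_mul (by fun_prop))
    fun α hα => ?_
  exact mul_le_mul_of_nonneg_left (hc α hα) (by linarith [hα.2])

lemma div_three_le_integral_one_sub_mul {f : ℝ → ℝ} {c u : ℝ} (hu : 0 ≤ u) (hc0 : 0 ≤ c)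
    (hf : IntervalIntegrable f volume 0 1) (hf0 : ∀ α ∈ Icc (0 : ℝ) 1, 0 ≤ f α)
    (hc : ∀ α ∈ Icc (0 : ℝ) 1, α ∉ Ioo u (2 * u) → c ≤ f α) :
    c / 3 ≤ ∫ α in (0 : ℝ)..1, (1 - α) * f α := by
  set a := min u 1 with ha
  set b := min (2 * u) 1 with hb
  have ha0 : 0 ≤ a := le_min hu zero_le_one
  have hab : a ≤ b := min_le_min (by linarith) le_rfl
  have hb1 : b ≤ 1 := min_le_right _ _
  have hsub : ∀ s ∈ Icc (0 : ℝ) 1, ∀ t ∈ Icc (0 : ℝ) 1, IntervalIntegrable f volume s t :=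
    fun s hs t ht => hf.mono_set (uIcc_subset_uIcc (by simpa using hs) (by simpa using ht))
  have hmem_a : a ∈ Icc (0 : ℝ) 1 := ⟨ha0, hab.trans hb1⟩
  have hmem_b : b ∈ Icc (0 : ℝ) 1 := ⟨ha0.trans hab, hb1⟩
  have hleft := mul_integral_one_sub_le_integral ha0 hmem_a.2 (hsub 0 (by simp) a hmem_a)
    fun α hα => hc α ⟨hα.1.le, by linarith [hα.2]⟩ fun h => by linarith [h.1, hα.2, min_le_left u 1]
  have hmid : 0 ≤ ∫ α in a..b, (1 - α) * f α :=
    intervalIntegral.integral_nonneg hab fun α hα =>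
      mul_nonneg (by linarith [hα.2]) (hf0 α ⟨by linarith [hα.1], by linarith [hα.2]⟩)
  have hright := mul_integral_one_sub_le_integral hb1 le_rfl (hsub b hmem_b 1 (by simp))
    fun α hα => by
      refine hc α ⟨by linarith [hα.1], hα.2.le⟩ fun h => ?_
      have : b = 2 * u := min_eq_left (by by_contra! h'; linarith [min_eq_right h'.le, hα.1, hα.2])
      linarith [h.2, hα.1]
  have hweight : 1 / 3 ≤ (a - 0 - (a ^ 2 - 0 ^ 2) / 2) + (1 - b - (1 ^ 2 - b ^ 2) / 2) := by
    rcases le_total u (1 / 2) with hu2 | hu2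
    · rw [ha, hb, min_eq_left (by linarith : u ≤ 1), min_eq_left (by linarith : 2 * u ≤ 1)]
      nlinarith [sq_nonneg (3 * u - 1)]
    · rw [hb, min_eq_right (by linarith : 1 ≤ 2 * u)]
      nlinarith [min_le_right u 1, le_min hu2 (by norm_num : (1 : ℝ) / 2 ≤ 1)]
  have hint : ∀ s ∈ Icc (0 : ℝ) 1, ∀ t ∈ Icc (0 : ℝ) 1,
      IntervalIntegrable (fun α => (1 - α) * f α) volume s t :=
    fun s hs t ht => (hsub s hs t ht).continuousOn_mul (by fun_prop)
  rw [← intervalIntegral.integral_add_adjacent_intervals (hint 0 (by simp) a hmem_a)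
      (hint a hmem_a 1 (by simp)),
    ← intervalIntegral.integral_add_adjacent_intervals (hint a hmem_a b hmem_b)
      (hint b hmem_b 1 (by simp))]
  nlinarith

section NormedSpace

variable {E : Type*} [SeminormedAddCommGroup E] [NormedSpace ℝ E]

lemma div_three_le_norm_add_smul (x y : E) {α : ℝ} (hα : 0 ≤ α)
    (h : α ∉ Ioo (2 * ‖x‖ / (3 * ‖y‖)) (2 * (2 * ‖x‖ / (3 * ‖y‖)))) :
    ‖x‖ / 3 ≤ ‖x + α • y‖ := by
  have hrev : |‖x‖ - α * ‖y‖| ≤ ‖x + α • y‖ := by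
    simpa [norm_smul, abs_of_nonneg hα] using abs_norm_sub_norm_le x (-(α • y))
  rcases (norm_nonneg y).eq_or_lt with hy | hy
  · rw [← hy, mul_zero, sub_zero, abs_norm] at hrev
    linarith [norm_nonneg x]
  · have hu : 2 * ‖x‖ / (3 * ‖y‖) * ‖y‖ = 2 * ‖x‖ / 3 := by field_simp
    rw [mem_Ioo, not_and_or, not_lt, not_lt] at h
    rcases h with h | h
    · have := mul_le_mul_of_nonneg_right h hy.le
      linarith [le_abs_self (‖x‖ - α * ‖y‖)]
    · have := mul_le_mul_of_nonneg_right h hy.le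
      linarith [neg_abs_le (‖x‖ - α * ‖y‖)]

lemma rpow_le_integral_one_sub_mul_norm_add_smul_rpow {p : ℝ} (hp : 2 ≤ p) (x y : E) :
    (3 : ℝ) ^ (1 - p) * ‖x‖ ^ (p - 2) ≤ ∫ α in (0 : ℝ)..1, (1 - α) * ‖x + α • y‖ ^ (p - 2) := by
  have hq : 0 ≤ p - 2 := by linarith
  have hconst : (3 : ℝ) ^ (1 - p) * ‖x‖ ^ (p - 2) = (‖x‖ / 3) ^ (p - 2) / 3 := by
    rw [Real.div_rpow (norm_nonneg x) zero_le_three, Real.rpow_sub zero_lt_three,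
      Real.rpow_sub zero_lt_three]
    field_simp
    ring
  rw [hconst]
  refine div_three_le_integral_one_sub_mul (u := 2 * ‖x‖ / (3 * ‖y‖)) (by positivity)
    (by positivity) (Continuous.intervalIntegrable (by fun_prop) _ _)
    (fun α _ => by positivity) fun α hα hu => ?_
  exact Real.rpow_le_rpow (by positivity) (div_three_le_norm_add_smul x y hα.1 hu) hq

end NormedSpace

section InnerProductSpace

variable {E : Type*} [NormedAddCommGroup E] [InnerProductSpace ℝ E] [DecidableEq E]

/-- The integrand of the theorem: `p⁻¹` times the second derivative of `‖·‖ ^ p` at `z` in the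
direction `y`, with the term `‖z‖ ^ (p - 4)`, singular at `z = 0`, switched off there. -/
noncomputable def normRpowHessian (p : ℝ) (z y : E) : ℝ :=
  ‖z‖ ^ (p - 2) * ‖y‖ ^ 2 + (p - 2) * (if z ≠ 0 then 1 else 0) * ‖z‖ ^ (p - 4) * ⟪y, z⟫ ^ 2

lemma indicator_mul_rpow_mul_inner_sq_le (p : ℝ) (z y : E) :
    (if z ≠ 0 then 1 else 0) * ‖z‖ ^ (p - 4) * ⟪y, z⟫ ^ 2 ≤ ‖z‖ ^ (p - 2) * ‖y‖ ^ 2 := by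
  split_ifs with hz
  · have hinner : ⟪y, z⟫ ^ 2 ≤ (‖y‖ * ‖z‖) ^ 2 := by
      rw [← sq_abs]
      exact pow_le_pow_left₀ (abs_nonneg _) (abs_real_inner_le_norm y z) 2
    calc 1 * ‖z‖ ^ (p - 4) * ⟪y, z⟫ ^ 2 ≤ ‖z‖ ^ (p - 4) * (‖y‖ * ‖z‖) ^ 2 := by
          rw [one_mul]; gcongr
      _ = ‖z‖ ^ (p - 2) * ‖y‖ ^ 2 := by
          rw [show p - 2 = p - 4 + (2 : ℕ) by push_cast; ring,
            Real.rpow_add_natCast (norm_ne_zero_iff.mpr hz)]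
          ring
  · rw [zero_mul, zero_mul]
    positivity

lemma jump_term_nonneg {p : ℝ} (hp : 2 ≤ p) (z y : E) :
    0 ≤ (p - 2) * (if z ≠ 0 then 1 else 0) * ‖z‖ ^ (p - 4) * ⟪y, z⟫ ^ 2 := by
  have : 0 ≤ p - 2 := by linarith
  split_ifs <;> positivity

lemma le_normRpowHessian {p : ℝ} (hp : 2 ≤ p) (z y : E) :
    ‖z‖ ^ (p - 2) * ‖y‖ ^ 2 ≤ normRpowHessian p z y :=
  le_add_of_nonneg_right (jump_term_nonneg hp z y)

lemma normRpowHessian_le {p : ℝ} (hp : 2 ≤ p) (z y : E) :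
    normRpowHessian p z y ≤ (p - 1) * (‖z‖ ^ (p - 2) * ‖y‖ ^ 2) := by
  have hjump := mul_le_mul_of_nonneg_left (indicator_mul_rpow_mul_inner_sq_le p z y)
    (by linarith : 0 ≤ p - 2)
  simp only [normRpowHessian, mul_assoc] at hjump ⊢
  linarith

lemma intervalIntegrable_normRpowHessian_add_smul {p : ℝ} (hp : 2 ≤ p) (x y : E) (a b : ℝ) :
    IntervalIntegrable (fun α => normRpowHessian p (x + α • y) y) volume a b := by
  have hq : 0 ≤ p - 2 := by linarith
  have hline : Continuous fun α : ℝ => x + α • y := by fun_prop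
  have hmeas : Measurable fun α : ℝ => normRpowHessian p (x + α • y) y := by
    have hne : MeasurableSet {α : ℝ | x + α • y ≠ 0} :=
      (isOpen_ne_fun hline continuous_const).measurableSet
    refine (Continuous.measurable (by fun_prop)).add (Measurable.mul ?_
      (Continuous.measurable (by fun_prop)))
    exact (measurable_const.mul (Measurable.ite hne measurable_const measurable_const)).mul
      (hline.norm.measurable.pow_const _)
  refine (Continuous.intervalIntegrable (by fun_prop) a b).mono_fun'
    (f := fun α => normRpowHessian p (x + α • y) y)
    (g := fun α => (p - 1) * (‖x + α • y‖ ^ (p - 2) * ‖y‖ ^ 2))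
    hmeas.aestronglyMeasurable (ae_of_all _ fun α => ?_)
  dsimp only
  rw [Real.norm_of_nonneg ((by positivity : (0 : ℝ) ≤ _).trans (le_normRpowHessian hp _ y))]
  exact normRpowHessian_le hp _ y

end InnerProductSpace

theorem taylor_remainder_jump_estimate
    (p : ℝ) (hp : 2 ≤ p) (l : ℕ) (x y : EuclideanSpace ℝ (Fin l)) :
    p * (3 : ℝ) ^ (1 - p) * ‖y‖ ^ 2 * ‖x‖ ^ (p - 2) ≤
      p * ∫ α in (0:ℝ)..1, (1 - α) *
        (‖x + α • y‖ ^ (p - 2) * ‖y‖ ^ 2 +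
          (p - 2) * (if x + α • y ≠ 0 then 1 else 0) * ‖x + α • y‖ ^ (p - 4) *
            ⟪y, x + α • y⟫ ^ 2) := by
  have hp0 : 0 ≤ p := by linarith
  have hq : 0 ≤ p - 2 := by linarith
  change _ ≤ p * ∫ α in (0 : ℝ)..1, (1 - α) * normRpowHessian p (x + α • y) y
  calc p * (3 : ℝ) ^ (1 - p) * ‖y‖ ^ 2 * ‖x‖ ^ (p - 2)
      = p * (‖y‖ ^ 2 * ((3 : ℝ) ^ (1 - p) * ‖x‖ ^ (p - 2))) := by ring
    _ ≤ p * (‖y‖ ^ 2 * ∫ α in (0 : ℝ)..1, (1 - α) * ‖x + α • y‖ ^ (p - 2)) := by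
      gcongr
      exact rpow_le_integral_one_sub_mul_norm_add_smul_rpow hp x y
    _ = p * ∫ α in (0 : ℝ)..1, (1 - α) * (‖x + α • y‖ ^ (p - 2) * ‖y‖ ^ 2) := by
      rw [← intervalIntegral.integral_const_mul]
      simp only [mul_left_comm (‖y‖ ^ 2), mul_comm (‖y‖ ^ 2)]
    _ ≤ p * ∫ α in (0 : ℝ)..1, (1 - α) * normRpowHessian p (x + α • y) y := by
      gcongr
      refine intervalIntegral.integral_mono_on zero_le_one
        (Continuous.intervalIntegrable (by fun_prop) _ _)
        ((intervalIntegrable_normRpowHessian_add_smul hp x y 0 1).continuousOn_mul (by fun_prop))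
        fun α hα => ?_
      exact mul_le_mul_of_nonneg_left (le_normRpowHessian hp _ y) (by linarith [hα.2])
end
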